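/- arXiv:2205.05820 — 2 statements merged into one kernel-verified Lean document; each statement's English description precedes it below -/
import Mathlib

section
/- Let $B, \hat{B} \in \mathbb{R}^{d \times r}$ each have orthonormal columns with $\|\hat{B}^\top B_\perp\|_F \le \varepsilon$, let $\theta = B\alpha$ with $\|\theta\| \le \phi_{\max}$, let $N_2$ be a positive multiple of $r$, and let the actions $x_1, \dots, x_{N_2}$ cycle through an orthonormal basis of $\mathrm{span}(\hat{B})$. Suppose rewards are $y_t = x_t^\top \theta + \eta_t$ with $\eta_t$ independent, zero-mean, variance at most $1$. Let $X = [x_1, \dots, x_{N_2}]$, $Y = (y_1, \dots, y_{N_2})^\top$, $\hat{\alpha} = (\hat{B}^\top X X^\top \hat{B})^{-1} \hat{B}^\top X Y$, and $\hat{\theta} = \hat{B}\hat{\alpha}$. Then $\mathbb{E}\|\hat{\theta} - \theta\|^2 \le \phi_{\max}^2 \varepsilon^2 + \frac{r^2}{N_2}$. -/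
open Matrix MeasureTheory ProbabilityTheory

/-- Squared Frobenius norm of a real matrix. -/
def frobSq {m n : ℕ} (A : Matrix (Fin m) (Fin n) ℝ) : ℝ := ∑ i, ∑ j, (A i j) ^ 2

/-- Frobenius norm of a real matrix. -/
noncomputable def frobNorm {m n : ℕ} (A : Matrix (Fin m) (Fin n) ℝ) : ℝ :=
  Real.sqrt (frobSq A)

/-- Euclidean norm of a vector in `ℝ^d`. -/
noncomputable def vnorm {d : ℕ} (v : Fin d → ℝ) : ℝ := Real.sqrt (v ⬝ᵥ v)

lemma frobSq_nonneg {m n : ℕ} (A : Matrix (Fin m) (Fin n) ℝ) : 0 ≤ frobSq A :=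
  Finset.sum_nonneg fun _ _ => Finset.sum_nonneg fun _ _ => sq_nonneg _

lemma frobSq_eq_trace {m n : ℕ} (A : Matrix (Fin m) (Fin n) ℝ) :
    frobSq A = (Aᵀ * A).trace := by
  simp only [frobSq, Matrix.trace, Matrix.diag, Matrix.mul_apply, Matrix.transpose_apply]
  rw [Finset.sum_comm]
  exact Finset.sum_congr rfl fun j _ => Finset.sum_congr rfl fun i _ => by ring

lemma frobSq_transpose {m n : ℕ} (A : Matrix (Fin m) (Fin n) ℝ) :
    frobSq Aᵀ = frobSq A := by
  simp only [frobSq, Matrix.transpose_apply]; rw [Finset.sum_comm]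

lemma cyc_sum {r N₂ : ℕ} (hr : 0 < r) (k : ℕ) (hk : N₂ = k * r) (f : Fin r → ℝ) :
    ∑ t : Fin N₂, f ⟨t.val % r, Nat.mod_lt _ hr⟩ = k * ∑ p, f p := by
  subst hk
  rw [show (∑ t : Fin (k*r), f ⟨t.val % r, Nat.mod_lt _ hr⟩)
      = ∑ n ∈ Finset.range (k*r), f ⟨n % r, Nat.mod_lt _ hr⟩ from
    Fin.sum_univ_eq_sum_range (fun n => f ⟨n % r, Nat.mod_lt _ hr⟩) (k*r)]
  induction k with
  | zero => simp
  | succ k ih =>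
    rw [Nat.succ_mul, Finset.sum_range_add, ih]
    have : ∀ i ∈ Finset.range r, f ⟨(k*r + i) % r, Nat.mod_lt _ hr⟩ = f ⟨i % r, Nat.mod_lt _ hr⟩ := by
      intro i _
      congr 1
      exact Fin.ext (by simp [Nat.add_comm (k*r) i, Nat.add_mul_mod_self_right])
    rw [Finset.sum_congr rfl this]
    have h2 : ∑ i ∈ Finset.range r, f ⟨i % r, Nat.mod_lt _ hr⟩ = ∑ p, f p := by
      rw [← Fin.sum_univ_eq_sum_range (fun n => f ⟨n % r, Nat.mod_lt _ hr⟩) r]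
      exact Finset.sum_congr rfl fun p _ => congrArg f (Fin.ext (Nat.mod_eq_of_lt p.isLt))
    rw [h2]; push_cast; ring

lemma expand_quad {d N : ℕ} (v : Fin d → ℝ) (c : ℝ) (M : Matrix (Fin d) (Fin N) ℝ) (e : Fin N → ℝ) :
    ∑ i, (v i + c * ∑ t, M i t * e t)^2
      = (∑ i, (v i)^2) + (∑ t, (2*c*∑ i, v i * M i t) * e t)
        + ∑ s, ∑ t, (c^2 * ∑ i, M i s * M i t) * (e s * e t) := by
  have h1 : ∀ i : Fin d, (v i + c * ∑ t, M i t * e t)^2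
      = (v i)^2 + (∑ t, 2*c*(v i * M i t)*e t) + ∑ s, ∑ t, c^2*((M i s*M i t)*(e s*e t)) := by
    intro i
    have hs : (∑ t, M i t * e t)^2 = ∑ s, ∑ t, (M i s*e s)*(M i t*e t) := by
      rw [sq, Finset.sum_mul_sum]
    calc (v i + c * ∑ t, M i t * e t)^2
        = (v i)^2 + 2*c*(v i)*(∑ t, M i t * e t) + c^2*(∑ t, M i t * e t)^2 := by ring
      _ = (v i)^2 + (∑ t, 2*c*(v i * M i t)*e t) + ∑ s, ∑ t, c^2*((M i s*M i t)*(e s*e t)) := by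
          rw [hs, Finset.mul_sum, Finset.mul_sum]
          congr 1
          · congr 1
            exact Finset.sum_congr rfl fun t _ => by ring
          · exact Finset.sum_congr rfl fun s _ => by
              rw [Finset.mul_sum]
              exact Finset.sum_congr rfl fun t _ => by ring
  rw [Finset.sum_congr rfl fun i _ => h1 i]
  rw [Finset.sum_add_distrib, Finset.sum_add_distrib]
  congr 1
  · congr 1
    rw [Finset.sum_comm]
    refine Finset.sum_congr rfl fun t _ => ?_
    simp only [Finset.mul_sum, Finset.sum_mul]
  · rw [Finset.sum_comm]
    refine Finset.sum_congr rfl fun s _ => ?_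
    rw [Finset.sum_comm]
    refine Finset.sum_congr rfl fun t _ => ?_
    simp only [Finset.mul_sum, Finset.sum_mul]
    exact Finset.sum_congr rfl fun i _ => by ring


/-- Estimation-error bound of the Representation Transfer algorithm:
if `‖B̂ᵀ B_⊥‖_F ≤ ε`, `θ = B α` with `‖θ‖ ≤ φ_max`, `N₂` is a positive multiple of
`r`, actions cycle through an orthonormal basis of `span(B̂)`, rewards are
`y_t = x_tᵀ θ + η_t` with independent zero-mean noise of variance at most 1,
`α̂ = (B̂ᵀXXᵀB̂)⁻¹ B̂ᵀ X Y` and `θ̂ = B̂ α̂`, then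
`𝔼‖θ̂ - θ‖² ≤ φ_max² ε² + r²/N₂`. -/
theorem stmt9 {d r N₂ : ℕ} (hr : 0 < r) (hN₂ : 0 < N₂) (hdvd : r ∣ N₂)
    {Ω : Type*} [MeasurableSpace Ω] (μ : Measure Ω) [IsProbabilityMeasure μ]
    (B Bhat : Matrix (Fin d) (Fin r) ℝ) (Bperp : Matrix (Fin d) (Fin (d - r)) ℝ)
    (hB : Bᵀ * B = 1) (hBhat : Bhatᵀ * Bhat = 1)
    (hBperp : Bperpᵀ * Bperp = 1) (hBBperp : Bᵀ * Bperp = 0)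
    (hcomp : B * Bᵀ + Bperp * Bperpᵀ = 1)
    (ε : ℝ) (hε : frobNorm (Bhatᵀ * Bperp) ≤ ε)
    (α : Fin r → ℝ) (θ : Fin d → ℝ) (hθ : θ = B.mulVec α)
    (φmax : ℝ) (hφmax : vnorm θ ≤ φmax)
    (a : Fin r → Fin d → ℝ)
    (ha : ∀ i j, a i ⬝ᵥ a j = if i = j then (1 : ℝ) else 0)
    (haspan : Submodule.span ℝ (Set.range a) = LinearMap.range Bhat.mulVecLin)
    (x : Fin N₂ → Fin d → ℝ)
    (hx : ∀ t : Fin N₂, x t = a ⟨t.val % r, Nat.mod_lt _ hr⟩)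
    (X : Matrix (Fin d) (Fin N₂) ℝ) (hX : X = Matrix.of fun i t => x t i)
    (η : Fin N₂ → Ω → ℝ)
    (hmeas : ∀ t, Measurable (η t))
    (hindep : iIndepFun η μ)
    (hmean : ∀ t, ∫ ω, η t ω ∂μ = 0)
    (hvar : ∀ t, ∫ ω, (η t ω) ^ 2 ∂μ ≤ 1)
    (hL2 : ∀ t, MemLp (η t) 2 μ)
    (y : Fin N₂ → Ω → ℝ) (hy : ∀ t ω, y t ω = x t ⬝ᵥ θ + η t ω)
    (αhat : Ω → Fin r → ℝ)
    (hαhat : ∀ ω, αhat ω =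
      (Bhatᵀ * X * Xᵀ * Bhat)⁻¹.mulVec ((Bhatᵀ * X).mulVec fun t => y t ω))
    (θhat : Ω → Fin d → ℝ) (hθhat : ∀ ω, θhat ω = Bhat.mulVec (αhat ω)) :
    ∫ ω, (θhat ω - θ) ⬝ᵥ (θhat ω - θ) ∂μ ≤ φmax ^ 2 * ε ^ 2 + (r : ℝ) ^ 2 / N₂ := by
  -- arithmetic setup
  obtain ⟨k, hkr⟩ := hdvd
  have hk : N₂ = k * r := by rw [hkr, Nat.mul_comm]
  have hkpos : 0 < k := by
    rcases Nat.eq_zero_or_pos k with h | h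
    · subst h; simp at hk; omega
    · exact h
  have hkR : (k : ℝ) ≠ 0 := Nat.cast_ne_zero.mpr hkpos.ne'
  set c : ℝ := (k : ℝ)⁻¹ with hc
  set A : Matrix (Fin d) (Fin r) ℝ := Matrix.of fun i p => a p i with hA
  set P : Matrix (Fin d) (Fin d) ℝ := Bhat * Bhatᵀ with hP
  -- projection facts
  have hmemA : ∀ p, a p ∈ LinearMap.range Bhat.mulVecLin := by
    intro p; rw [← haspan]; exact Submodule.subset_span ⟨p, rfl⟩
  have hProj : ∀ u : Fin d → ℝ, u ∈ LinearMap.range Bhat.mulVecLin → P.mulVec u = u := by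
    rintro u ⟨w, rfl⟩
    show P.mulVec (Bhat.mulVec w) = Bhat.mulVec w
    rw [Matrix.mulVec_mulVec, hP, Matrix.mul_assoc, hBhat, Matrix.mul_one]
  have hPa : ∀ p, P.mulVec (a p) = a p := fun p => hProj _ (hmemA p)
  have hAfix : ∀ u ∈ Submodule.span ℝ (Set.range a), (A * Aᵀ).mulVec u = u := by
    intro u hu
    induction hu using Submodule.span_induction with
    | mem u hu =>
      obtain ⟨p, rfl⟩ := hu
      have h1 : Aᵀ.mulVec (a p) = fun q => if q = p then 1 else 0 := by
        funext q
        have := ha q p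
        simpa [Matrix.mulVec, dotProduct, Matrix.transpose_apply, hA] using this
      rw [← Matrix.mulVec_mulVec, h1]
      funext i
      simp [Matrix.mulVec, dotProduct, hA, Finset.sum_ite_eq']
    | zero => simp [Matrix.mulVec_zero]
    | add u w _ _ hu hw => rw [Matrix.mulVec_add, hu, hw]
    | smul t u _ hu => rw [Matrix.mulVec_smul, hu]
  have hBhatcol : ∀ j : Fin r, (fun i => Bhat i j) ∈ Submodule.span ℝ (Set.range a) := by
    intro j; rw [haspan]
    refine ⟨fun q => if q = j then 1 else 0, ?_⟩
    funext i
    simp [Matrix.mulVecLin_apply, Matrix.mulVec, dotProduct, Finset.sum_ite_eq']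
  have hPB : A * Aᵀ * Bhat = Bhat := by
    ext i j
    have h := congrFun (hAfix _ (hBhatcol j)) i
    simpa [Matrix.mul_apply, Matrix.mulVec, dotProduct] using h
  have hPA : P * A = A := by
    ext i p
    have h := congrFun (hPa p) i
    simpa [Matrix.mul_apply, Matrix.mulVec, dotProduct, hA] using h
  have hsymm : (A * Aᵀ)ᵀ = A * Aᵀ := by rw [Matrix.transpose_mul, Matrix.transpose_transpose]
  have hPsymm : Pᵀ = P := by rw [hP, Matrix.transpose_mul, Matrix.transpose_transpose]
  have hAA : A * Aᵀ = P := by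
    have h1 : A * Aᵀ * P = P := by rw [hP, ← Matrix.mul_assoc, hPB]
    calc A * Aᵀ = P * (A * Aᵀ) := by rw [← Matrix.mul_assoc, hPA]
      _ = ((A * Aᵀ)ᵀ * Pᵀ)ᵀ := by rw [← Matrix.transpose_mul, Matrix.transpose_transpose]
      _ = (A * Aᵀ * P)ᵀ := by rw [hsymm, hPsymm]
      _ = P := by rw [h1, hPsymm]
  have hXcol : ∀ (i : Fin d) (t : Fin N₂), X i t = a ⟨t.val % r, Nat.mod_lt _ hr⟩ i := by
    intro i t; rw [hX]; show x t i = _; rw [hx]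
  have hXX : X * Xᵀ = (k : ℝ) • P := by
    ext i j
    rw [← hAA]
    simp only [Matrix.mul_apply, Matrix.transpose_apply, Matrix.smul_apply, smul_eq_mul]
    calc ∑ t, X i t * X j t
        = ∑ t : Fin N₂, (fun p : Fin r => a p i * a p j) ⟨t.val % r, Nat.mod_lt _ hr⟩ :=
          Finset.sum_congr rfl fun t _ => by rw [hXcol i t, hXcol j t]
      _ = k * ∑ p, a p i * a p j := cyc_sum hr k hk (fun p => a p i * a p j)
      _ = k * ∑ p, A i p * A j p := rfl
  have hPX : P * X = X := by
    ext i t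
    have h := congrFun (hPa ⟨t.val % r, Nat.mod_lt _ hr⟩) i
    simp only [Matrix.mul_apply, Matrix.mulVec, dotProduct] at h ⊢
    calc ∑ l, P i l * X l t = ∑ l, P i l * a ⟨t.val % r, Nat.mod_lt _ hr⟩ l :=
          Finset.sum_congr rfl fun l _ => by rw [hXcol l t]
      _ = a ⟨t.val % r, Nat.mod_lt _ hr⟩ i := h
      _ = X i t := (hXcol i t).symm
  have hGram : Bhatᵀ * X * Xᵀ * Bhat = (k : ℝ) • (1 : Matrix (Fin r) (Fin r) ℝ) := by
    rw [Matrix.mul_assoc Bhatᵀ X Xᵀ, hXX, Matrix.mul_smul, Matrix.smul_mul, hP,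
      ← Matrix.mul_assoc, hBhat, Matrix.one_mul, hBhat]
  have hInv : (Bhatᵀ * X * Xᵀ * Bhat)⁻¹ = c • (1 : Matrix (Fin r) (Fin r) ℝ) := by
    apply Matrix.inv_eq_right_inv
    rw [hGram, Matrix.smul_mul, Matrix.mul_smul, Matrix.one_mul, smul_smul, hc,
      mul_inv_cancel₀ hkR, one_smul]
  have hBXXT : Bhatᵀ * X * Xᵀ = (k : ℝ) • Bhatᵀ := by
    rw [Matrix.mul_assoc, hXX, Matrix.mul_smul, hP, ← Matrix.mul_assoc, hBhat, Matrix.one_mul]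
  have hBBX : Bhat * (Bhatᵀ * X) = X := by rw [← Matrix.mul_assoc, ← hP, hPX]
  have hc1 : ∀ w : Fin r → ℝ, (c • (1 : Matrix (Fin r) (Fin r) ℝ)).mulVec w = c • w := by
    intro w; rw [Matrix.smul_mulVec, Matrix.one_mulVec]
  have hyv : ∀ ω, (fun t => y t ω) = Xᵀ.mulVec θ + fun t => η t ω := by
    intro ω
    funext t
    have h1 : Xᵀ.mulVec θ t = x t ⬝ᵥ θ := by
      simp [Matrix.mulVec, dotProduct, hX, Matrix.transpose_apply]
    simp [hy, Pi.add_apply, h1]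
  have hαω : ∀ ω, αhat ω = Bhatᵀ.mulVec θ + c • ((Bhatᵀ * X).mulVec fun t => η t ω) := by
    intro ω
    rw [hαhat, hInv, hc1, hyv ω, Matrix.mulVec_add, Matrix.mulVec_mulVec, hBXXT,
      Matrix.smul_mulVec, smul_add, smul_smul, hc, inv_mul_cancel₀ hkR, one_smul]
  have key : ∀ ω, θhat ω - θ = (P.mulVec θ - θ) + c • X.mulVec (fun t => η t ω) := by
    intro ω
    rw [hθhat, hαω, Matrix.mulVec_add, Matrix.mulVec_smul, Matrix.mulVec_mulVec,
      Matrix.mulVec_mulVec, hBBX, ← hP]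
    abel
  set v : Fin d → ℝ := P.mulVec θ - θ with hv
  have hpt : ∀ ω, (θhat ω - θ) ⬝ᵥ (θhat ω - θ)
      = (∑ i, (v i)^2) + (∑ t, (2*c*∑ i, v i * X i t) * η t ω)
        + ∑ s, ∑ t, (c^2 * ∑ i, X i s * X i t) * (η s ω * η t ω) := by
    intro ω
    rw [key ω]
    have h2 : ((v + c • X.mulVec fun t => η t ω) ⬝ᵥ (v + c • X.mulVec fun t => η t ω))
        = ∑ i, (v i + c * ∑ t, X i t * η t ω)^2 := by
      simp only [dotProduct, Pi.add_apply, Pi.smul_apply, smul_eq_mul,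
        Matrix.mulVec, sq]
    rw [h2]
    exact expand_quad v c X (fun t => η t ω)
  -- integrability
  have hηint : ∀ t, Integrable (η t) μ := fun t => (hL2 t).integrable one_le_two
  have hprod : ∀ s t, Integrable (fun ω => η s ω * η t ω) μ := by
    intro s t
    by_cases hst : s = t
    · subst hst
      have := (hL2 s).integrable_sq
      simpa [sq] using this
    · exact (hindep.indepFun hst).integrable_mul (hηint s) (hηint t)
  have hprodint : ∀ s t : Fin N₂, s ≠ t → ∫ ω, η s ω * η t ω ∂μ = 0 := by
    intro s t hst
    have h := (hindep.indepFun hst).integral_mul_eq_mul_integral (hmeas s).aestronglyMeasurable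
      (hmeas t).aestronglyMeasurable
    have h2 : ∫ ω, η s ω * η t ω ∂μ = ∫ ω, (η s * η t) ω ∂μ := rfl
    rw [h2]
    rw [show ∫ ω, (η s * η t) ω ∂μ = (∫ ω, η s ω ∂μ) * ∫ ω, η t ω ∂μ from h,
      hmean s, hmean t, mul_zero]
  have hIlin : Integrable (fun ω => ∑ t, (2*c*∑ i, v i * X i t) * η t ω) μ :=
    integrable_finset_sum _ fun t _ => (hηint t).const_mul _
  have hIquad : Integrable
      (fun ω => ∑ s, ∑ t, (c^2 * ∑ i, X i s * X i t) * (η s ω * η t ω)) μ :=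
    integrable_finset_sum _ fun s _ => integrable_finset_sum _ fun t _ =>
      (hprod s t).const_mul _
  have hsplit : ∫ ω, (θhat ω - θ) ⬝ᵥ (θhat ω - θ) ∂μ
      = (∑ i, (v i)^2)
        + (∑ t, (2*c*∑ i, v i * X i t) * ∫ ω, η t ω ∂μ)
        + ∑ s, ∑ t, (c^2 * ∑ i, X i s * X i t) * ∫ ω, η s ω * η t ω ∂μ := by
    rw [integral_congr_ae (Filter.Eventually.of_forall hpt)]
    have hCL : Integrable
        (fun ω => (∑ i, (v i)^2) + ∑ t, (2*c*∑ i, v i * X i t) * η t ω) μ :=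
      (integrable_const _).add hIlin
    rw [integral_add hCL hIquad, integral_add (integrable_const _) hIlin]
    rw [integral_const, probReal_univ, one_smul]
    congr 1
    · congr 1
      rw [integral_finset_sum _ fun t _ => (hηint t).const_mul _]
      exact Finset.sum_congr rfl fun t _ => integral_const_mul _ _
    · rw [integral_finset_sum _ fun s _ =>
        integrable_finset_sum _ fun t _ => (hprod s t).const_mul _]
      refine Finset.sum_congr rfl fun s _ => ?_
      rw [integral_finset_sum _ fun t _ => (hprod s t).const_mul _]
      exact Finset.sum_congr rfl fun t _ => integral_const_mul _ _
  -- column norms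
  have hxx1 : ∀ s : Fin N₂, (∑ i, X i s * X i s) = 1 := by
    intro s
    have h1 : (∑ i, X i s * X i s)
        = ∑ i, a ⟨s.val % r, Nat.mod_lt _ hr⟩ i * a ⟨s.val % r, Nat.mod_lt _ hr⟩ i :=
      Finset.sum_congr rfl fun i _ => by rw [hXcol i s]
    have h2 := ha ⟨s.val % r, Nat.mod_lt _ hr⟩ ⟨s.val % r, Nat.mod_lt _ hr⟩
    simp only [if_pos rfl] at h2
    rw [h1]
    exact h2
  -- linear term vanishes
  have hlin0 : (∑ t, (2*c*∑ i, v i * X i t) * ∫ ω, η t ω ∂μ) = 0 := by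
    simp [hmean]
  -- quadratic term
  have hquadeq : (∑ s, ∑ t, (c^2 * ∑ i, X i s * X i t) * ∫ ω, η s ω * η t ω ∂μ)
      = ∑ s : Fin N₂, c^2 * ∫ ω, η s ω * η s ω ∂μ := by
    refine Finset.sum_congr rfl fun s _ => ?_
    rw [Finset.sum_eq_single_of_mem s (Finset.mem_univ s)
      (fun t _ hts => by rw [hprodint s t (Ne.symm hts), mul_zero])]
    rw [hxx1 s, mul_one]
  have hquadle : (∑ s : Fin N₂, c^2 * ∫ ω, η s ω * η s ω ∂μ) ≤ (N₂ : ℝ) * c^2 := by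
    have h1 : ∀ s : Fin N₂, c^2 * ∫ ω, η s ω * η s ω ∂μ ≤ c^2 := by
      intro s
      have h2 : ∫ ω, η s ω * η s ω ∂μ = ∫ ω, (η s ω)^2 ∂μ :=
        integral_congr_ae (Filter.Eventually.of_forall fun ω => (pow_two _).symm)
      calc c^2 * ∫ ω, η s ω * η s ω ∂μ ≤ c^2 * 1 := by
            rw [h2]
            exact mul_le_mul_of_nonneg_left (hvar s) (sq_nonneg c)
        _ = c^2 := mul_one _
    calc (∑ s : Fin N₂, c^2 * ∫ ω, η s ω * η s ω ∂μ)
        ≤ ∑ _s : Fin N₂, c^2 := Finset.sum_le_sum fun s _ => h1 s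
      _ = (N₂ : ℝ) * c^2 := by simp [Finset.sum_const, mul_comm]
  -- bias bound
  have hθθα : θ ⬝ᵥ θ = α ⬝ᵥ α := by
    rw [hθ, dotProduct_mulVec, ← Matrix.mulVec_transpose,
      Matrix.mulVec_mulVec, hB, Matrix.one_mulVec]
  have hθsq : θ ⬝ᵥ θ ≤ φmax^2 := by
    have h0 : (0:ℝ) ≤ θ ⬝ᵥ θ := Finset.sum_nonneg fun i _ => mul_self_nonneg _
    have h1 : θ ⬝ᵥ θ = (vnorm θ)^2 := (Real.sq_sqrt h0).symm
    rw [h1]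
    exact pow_le_pow_left₀ (Real.sqrt_nonneg _) hφmax 2
  have hαsq : α ⬝ᵥ α ≤ φmax^2 := hθθα ▸ hθsq
  have hα0 : (0:ℝ) ≤ α ⬝ᵥ α := Finset.sum_nonneg fun i _ => mul_self_nonneg _
  set G : Matrix (Fin d) (Fin r) ℝ := (P - 1) * B with hG
  have hvG : v = G.mulVec α := by
    rw [hv, hθ, hG]
    simp only [Matrix.mulVec_mulVec, hP, Matrix.sub_mul, Matrix.one_mul, Matrix.sub_mulVec]
  have hsumv : (∑ i, (v i)^2) ≤ frobSq G * (α ⬝ᵥ α) := by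
    have hCS : ∀ i, (v i)^2 ≤ (∑ j, (G i j)^2) * (∑ j, (α j)^2) := by
      intro i
      rw [hvG]
      have : (G.mulVec α) i = ∑ j, G i j * α j := rfl
      rw [this]
      exact Finset.sum_mul_sq_le_sq_mul_sq _ _ _
    calc (∑ i, (v i)^2) ≤ ∑ i, (∑ j, (G i j)^2) * (∑ j, (α j)^2) :=
          Finset.sum_le_sum fun i _ => hCS i
      _ = frobSq G * (α ⬝ᵥ α) := by
          rw [← Finset.sum_mul, frobSq]
          congr 1
          exact Finset.sum_congr rfl fun j _ => pow_two _
  -- Frobenius bound on G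
  have hPP : P * P = P := by
    rw [hP, Matrix.mul_assoc Bhat Bhatᵀ (Bhat * Bhatᵀ),
      ← Matrix.mul_assoc Bhatᵀ Bhat Bhatᵀ, hBhat, Matrix.one_mul]
  have hQQ : (P - 1) * (P - 1) = 1 - P := by
    have h : (P - 1) * (P - 1) = P*P - P - P + 1 := by noncomm_ring
    rw [h, hPP]
    abel
  have hGtG : Gᵀ * G = 1 - Bᵀ * P * B := by
    have h1 : (P - 1)ᵀ = P - 1 := by
      rw [Matrix.transpose_sub, hPsymm, Matrix.transpose_one]
    have h2 : Gᵀ * G = Bᵀ * ((P-1) * ((P-1) * B)) := by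
      rw [hG, Matrix.transpose_mul, h1]
      simp only [Matrix.mul_assoc]
    rw [h2, show (P-1) * ((P-1)*B) = ((P-1)*(P-1))*B from (Matrix.mul_assoc _ _ _).symm,
      hQQ, Matrix.sub_mul, Matrix.one_mul, Matrix.mul_sub, hB, hP]
    simp only [Matrix.mul_assoc]
  have htrBPB : (Bᵀ * P * B).trace = frobSq (Bᵀ * Bhat) := by
    have hM : Bᵀ * P * B = (Bᵀ*Bhat) * (Bᵀ*Bhat)ᵀ := by
      rw [hP, Matrix.transpose_mul, Matrix.transpose_transpose]
      simp only [Matrix.mul_assoc]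
    rw [hM, Matrix.trace_mul_comm, ← frobSq_eq_trace]
  have hfrobG : frobSq G ≤ ε^2 := by
    have hId : Bhatᵀ * (B * Bᵀ) * Bhat + Bhatᵀ * (Bperp * Bperpᵀ) * Bhat = 1 := by
      have h := congrArg (fun M => Bhatᵀ * M * Bhat) hcomp
      simp only [Matrix.mul_add, Matrix.add_mul, Matrix.mul_one] at h
      rw [h, hBhat]
    have htr1 : (Bhatᵀ * (B * Bᵀ) * Bhat).trace = frobSq (Bᵀ * Bhat) := by
      have h1 : Bhatᵀ * (B * Bᵀ) * Bhat = (Bᵀ*Bhat)ᵀ * (Bᵀ*Bhat) := by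
        rw [Matrix.transpose_mul, Matrix.transpose_transpose]
        simp only [Matrix.mul_assoc]
      rw [h1, ← frobSq_eq_trace]
    have htr2 : (Bhatᵀ * (Bperp * Bperpᵀ) * Bhat).trace = frobSq (Bhatᵀ * Bperp) := by
      have h1 : Bhatᵀ * (Bperp * Bperpᵀ) * Bhat = (Bperpᵀ*Bhat)ᵀ * (Bperpᵀ*Bhat) := by
        rw [Matrix.transpose_mul, Matrix.transpose_transpose]
        simp only [Matrix.mul_assoc]
      rw [h1, ← frobSq_eq_trace, ← frobSq_transpose (Bhatᵀ * Bperp),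
        Matrix.transpose_mul, Matrix.transpose_transpose]
    have hsum : frobSq (Bᵀ * Bhat) + frobSq (Bhatᵀ * Bperp) = r := by
      have h := congrArg Matrix.trace hId
      rw [Matrix.trace_add, htr1, htr2, Matrix.trace_one] at h
      simpa using h
    have hfrobG' : frobSq G = frobSq (Bhatᵀ * Bperp) := by
      rw [frobSq_eq_trace, hGtG, Matrix.trace_sub, htrBPB, Matrix.trace_one]
      have : (Fintype.card (Fin r) : ℝ) = r := by simp
      rw [this]
      linarith [hsum]
    have hεnn : (0:ℝ) ≤ ε := le_trans (Real.sqrt_nonneg _) hε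
    have h2 : frobSq (Bhatᵀ * Bperp) = (frobNorm (Bhatᵀ * Bperp))^2 :=
      (Real.sq_sqrt (frobSq_nonneg _)).symm
    rw [hfrobG', h2]
    exact pow_le_pow_left₀ (Real.sqrt_nonneg _) hε 2
  have hbias : (∑ i, (v i)^2) ≤ φmax^2 * ε^2 := by
    calc (∑ i, (v i)^2) ≤ frobSq G * (α ⬝ᵥ α) := hsumv
      _ ≤ ε^2 * φmax^2 := by
          apply mul_le_mul hfrobG hαsq hα0 (sq_nonneg ε)
      _ = φmax^2 * ε^2 := mul_comm _ _
  -- final arithmetic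
  have hNc : (N₂ : ℝ) * c^2 = (r:ℝ)^2 / N₂ := by
    have hN₂R : (N₂ : ℝ) = (k:ℝ) * r := by rw [hk]; push_cast; ring
    rw [hc, hN₂R]
    have hrR : (r:ℝ) ≠ 0 := Nat.cast_ne_zero.mpr hr.ne'
    field_simp
  rw [hsplit, hlin0, add_zero, hquadeq]
  have hq2 : (∑ s : Fin N₂, c^2 * ∫ ω, η s ω * η s ω ∂μ) ≤ (r:ℝ)^2 / N₂ := by
    rw [← hNc]; exact hquadle
  exact add_le_add hbias hq2
end

section
/- For any nonzero vectors $\theta, \hat{\theta} \in \mathbb{R}^d$, the instantaneous regret of the greedy action $\hat{\theta}/\|\hat{\theta}\|$ over the unit ball satisfies $\max_{\|x\| \le 1} x^\top \theta \;-\; \frac{\hat{\theta}^\top \theta}{\|\hat{\theta}\|} \;=\; \|\theta\| - \frac{\hat{\theta}^\top \theta}{\|\hat{\theta}\|} \;\le\; \frac{2\|\hat{\theta} - \theta\|^2}{\|\theta\|}$. -/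
open Matrix

lemma dot_self_nonneg {d : ℕ} (v : Fin d → ℝ) : 0 ≤ v ⬝ᵥ v :=
  Finset.sum_nonneg fun _ _ => mul_self_nonneg _

lemma vnorm_nonneg {d : ℕ} (v : Fin d → ℝ) : 0 ≤ vnorm v := Real.sqrt_nonneg _

lemma vnorm_sq {d : ℕ} (v : Fin d → ℝ) : vnorm v ^ 2 = v ⬝ᵥ v := by
  simp [vnorm, Real.sq_sqrt (dot_self_nonneg v)]

lemma vnorm_pos {d : ℕ} {v : Fin d → ℝ} (hv : v ≠ 0) : 0 < vnorm v := by
  have h : v ⬝ᵥ v ≠ 0 := by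
    intro h0
    apply hv
    funext i
    have := (Finset.sum_eq_zero_iff_of_nonneg (fun i _ => mul_self_nonneg (v i))).1 h0 i
      (Finset.mem_univ i)
    exact mul_self_eq_zero.1 this
  exact Real.sqrt_pos.2 (lt_of_le_of_ne (dot_self_nonneg v) (Ne.symm h))

lemma dot_le {d : ℕ} (u v : Fin d → ℝ) : u ⬝ᵥ v ≤ vnorm u * vnorm v := by
  have h := Finset.sum_mul_sq_le_sq_mul_sq Finset.univ u v
  have hd : u ⬝ᵥ v = ∑ i, u i * v i := rfl
  have hu : vnorm u = Real.sqrt (∑ i, u i ^ 2) := by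
    simp [vnorm, dotProduct, sq]
  have hv : vnorm v = Real.sqrt (∑ i, v i ^ 2) := by
    simp [vnorm, dotProduct, sq]
  calc u ⬝ᵥ v ≤ |∑ i, u i * v i| := hd ▸ le_abs_self _
    _ = Real.sqrt ((∑ i, u i * v i) ^ 2) := (Real.sqrt_sq_eq_abs _).symm
    _ ≤ Real.sqrt ((∑ i, u i ^ 2) * ∑ i, v i ^ 2) := Real.sqrt_le_sqrt h
    _ = vnorm u * vnorm v := by
        rw [Real.sqrt_mul (Finset.sum_nonneg fun _ _ => sq_nonneg _), hu, hv]

/-- For nonzero `θ, θ̂ ∈ ℝ^d`, the maximal reward over the unit ball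
is `‖θ‖` (attained), and the instantaneous regret of the greedy action `θ̂/‖θ̂‖`
satisfies `‖θ‖ - θ̂ᵀθ/‖θ̂‖ ≤ 2‖θ̂ - θ‖²/‖θ‖`. -/
theorem stmt10 {d : ℕ} (θ θhat : Fin d → ℝ) (hθ : θ ≠ 0) (hθhat : θhat ≠ 0) :
    IsGreatest ((fun x : Fin d → ℝ => x ⬝ᵥ θ) '' {x | vnorm x ≤ 1}) (vnorm θ)
    ∧ vnorm θ - (θhat ⬝ᵥ θ) / vnorm θhat
        ≤ 2 * (vnorm (θhat - θ)) ^ 2 / vnorm θ := by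
  have ha : 0 < vnorm θ := vnorm_pos hθ
  have hb : 0 < vnorm θhat := vnorm_pos hθhat
  constructor
  · constructor
    · refine ⟨(vnorm θ)⁻¹ • θ, ?_, ?_⟩
      · show vnorm ((vnorm θ)⁻¹ • θ) ≤ 1
        have key : ((vnorm θ)⁻¹ • θ) ⬝ᵥ ((vnorm θ)⁻¹ • θ) = 1 := by
          rw [smul_dotProduct, dotProduct_smul, smul_eq_mul, smul_eq_mul, ← vnorm_sq θ]
          field_simp
        have : vnorm ((vnorm θ)⁻¹ • θ) = 1 := by
          show Real.sqrt (((vnorm θ)⁻¹ • θ) ⬝ᵥ ((vnorm θ)⁻¹ • θ)) = 1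
          rw [key, Real.sqrt_one]
        linarith
      · show ((vnorm θ)⁻¹ • θ) ⬝ᵥ θ = vnorm θ
        rw [smul_dotProduct, smul_eq_mul, ← vnorm_sq θ]
        field_simp
    · rintro y ⟨x, hx, rfl⟩
      calc x ⬝ᵥ θ ≤ vnorm x * vnorm θ := dot_le x θ
        _ ≤ 1 * vnorm θ := mul_le_mul_of_nonneg_right hx (vnorm_nonneg θ)
        _ = vnorm θ := one_mul _
  · set a := vnorm θ
    set b := vnorm θhat
    set s := θhat ⬝ᵥ θ
    have he : vnorm (θhat - θ) ^ 2 = b ^ 2 + a ^ 2 - 2 * s := by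
      rw [vnorm_sq]
      have h1 : (θhat - θ) ⬝ᵥ (θhat - θ)
          = θhat ⬝ᵥ θhat - θhat ⬝ᵥ θ - θ ⬝ᵥ θhat + θ ⬝ᵥ θ := by
        simp [sub_dotProduct, dotProduct_sub]; ring
      rw [h1, dotProduct_comm θ θhat, ← vnorm_sq, ← vnorm_sq]
      ring
    have hs : s ≤ a * b := by
      have := dot_le θhat θ; rw [mul_comm] at this; exact this
    have hs' : -(a * b) ≤ s := by
      have h2 := dot_le (-θhat) θ
      have h3 : vnorm (-θhat) = vnorm θhat := by
        unfold vnorm; simp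
      rw [neg_dotProduct, h3] at h2
      linarith
    rw [he, show a - s / b = (a * b - s) / b by field_simp, div_le_div_iff₀ hb ha]
    nlinarith [sq_nonneg (a - b), sq_nonneg (a + b), mul_pos ha hb]
end
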